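/- arXiv:1412.5656 — 3 statements merged into one kernel-verified Lean document; each statement's English description precedes it below -/
import Mathlib

section
/- For Z ~ N(μ, I_k), the distribution of S_p(Z, θ₀) under mean vector μ equals the distribution of S_p(Z, θ₀ + c) under mean vector μ + c·(1,...,1), for any constant c ∈ ℝ. Consequently sup over {μ, θ₀ : θ₀ ≤ min_j μ(j)} of the (1-α)-quantile of S_p(Z, θ₀) equals the (1-α)-quantile of S_p(Z, 0) under μ = 0. -/
open MeasureTheory ProbabilityTheory
open scoped ENNReal NNReal

/-- The law of `Z ~ N(μ, I_k)`: product of one-dimensional Gaussians. -/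
noncomputable def gaussPi (k : ℕ) (μ : Fin k → ℝ) : Measure (Fin k → ℝ) :=
  Measure.pi (fun j => gaussianReal (μ j) 1)

/-- `θ̄(μ) = min_j μ(j)`. -/
noncomputable def thetaBar {k : ℕ} (μ : Fin k → ℝ) : ℝ := ⨅ j, μ j

/-- The `τ`-quantile of the statistic `S` under the measure `P`. -/
noncomputable def quantile {k : ℕ} (P : Measure (Fin k → ℝ)) (S : (Fin k → ℝ) → ℝ)
    (τ : ℝ) : ℝ :=
  sInf (setOf (fun t : ℝ => τ ≤ (P (setOf (fun z => S z ≤ t))).toReal))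

/-- One-sided `L^p` statistic `S_p(z, θ₀)`, `p ∈ [1, ∞]` (`p = ∞` gives the max statistic). -/
noncomputable def SpE (k : ℕ) (p : ℝ≥0∞) (z : Fin k → ℝ) (θ : ℝ) : ℝ :=
  if p = ∞ then ⨆ j, max (θ - z j) 0
  else (∑ j, (max (θ - z j) 0) ^ p.toReal) ^ (1 / p.toReal)

instance gaussPi_prob (k : ℕ) (μ : Fin k → ℝ) : IsProbabilityMeasure (gaussPi k μ) := by
  unfold gaussPi; infer_instance

lemma SpE_nonneg (k : ℕ) (p : ℝ≥0∞) (z : Fin k → ℝ) (θ : ℝ) : 0 ≤ SpE k p z θ := by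
  unfold SpE
  split
  · exact Real.iSup_nonneg fun j => le_max_right _ _
  · exact Real.rpow_nonneg
      (Finset.sum_nonneg fun j _ => Real.rpow_nonneg (le_max_right _ _) _) _

lemma SpE_measurable {k : ℕ} (hk : 0 < k) (p : ℝ≥0∞) (θ : ℝ) :
    Measurable (fun z : Fin k → ℝ => SpE k p z θ) := by
  have : Nonempty (Fin k) := ⟨⟨0, hk⟩⟩
  have hterm : ∀ j : Fin k, Measurable (fun z : Fin k → ℝ => max (θ - z j) 0) := fun j =>
    (measurable_const.sub (measurable_pi_apply j)).max measurable_const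
  unfold SpE
  split
  · simp_rw [← Finset.sup'_univ_eq_ciSup]
    have h := Finset.measurable_sup' (s := (Finset.univ : Finset (Fin k)))
      (f := fun j (z : Fin k → ℝ) => max (θ - z j) 0) Finset.univ_nonempty
      (fun j _ => hterm j)
    convert h using 1
    funext z
    simp [Finset.sup'_apply]
  · exact (Real.continuous_rpow_const (by positivity)).measurable.comp
      (Finset.measurable_sum _ fun j _ =>
        (Real.continuous_rpow_const ENNReal.toReal_nonneg).measurable.comp (hterm j))

lemma SpE_shift {k : ℕ} (p : ℝ≥0∞) (z : Fin k → ℝ) (θ c : ℝ) :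
    SpE k p (fun j => z j + c) (θ + c) = SpE k p z θ := by
  have h : ∀ j : Fin k, θ + c - (z j + c) = θ - z j := fun j => by ring
  unfold SpE
  simp_rw [h]

lemma SpE_anti {k : ℕ} (hk : 0 < k) (p : ℝ≥0∞) (θ : ℝ) {z ν : Fin k → ℝ}
    (hν : ∀ j, 0 ≤ ν j) :
    SpE k p (fun j => z j + ν j) θ ≤ SpE k p z θ := by
  have : Nonempty (Fin k) := ⟨⟨0, hk⟩⟩
  have hterm : ∀ j : Fin k, max (θ - (z j + ν j)) 0 ≤ max (θ - z j) 0 := fun j =>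
    max_le_max (by linarith [hν j]) le_rfl
  unfold SpE
  split
  · exact ciSup_le fun j => (hterm j).trans
      (le_ciSup (f := fun j => max (θ - z j) 0) (Finite.bddAbove_range _) j)
  · refine Real.rpow_le_rpow
      (Finset.sum_nonneg fun j _ => Real.rpow_nonneg (le_max_right _ _) _)
      (Finset.sum_le_sum fun j _ =>
        Real.rpow_le_rpow (le_max_right _ _) (hterm j) ENNReal.toReal_nonneg)
      (by positivity)

lemma gaussPi_shift {k : ℕ} (μ ν : Fin k → ℝ) :
    gaussPi k (fun j => μ j + ν j) = Measure.map (fun z j => z j + ν j) (gaussPi k μ) :=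
  (measurePreserving_pi (fun j => gaussianReal (μ j) 1)
    (fun j => gaussianReal (μ j + ν j) 1)
    (fun j => ⟨measurable_id.add_const (ν j), gaussianReal_map_add_const (ν j)⟩)).map_eq.symm

lemma shift_measurable {k : ℕ} (ν : Fin k → ℝ) :
    Measurable (fun (z : Fin k → ℝ) j => z j + ν j) :=
  measurable_pi_iff.mpr fun j => by fun_prop

/-- Translation invariance of the law of `S_p(Z, θ₀)`, and the resulting reduction of the
least favorable null quantile to `θ₀ = 0`, `μ = 0`. -/
theorem stmt5 (k : ℕ) (hk : 0 < k) (p : ℝ≥0∞) (hp : 1 ≤ p) (α : ℝ)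
    (hα : α ∈ Set.Ioo (0 : ℝ) 1) :
    (∀ (μ : Fin k → ℝ) (θ₀ c : ℝ),
      Measure.map (fun z => SpE k p z θ₀) (gaussPi k μ)
        = Measure.map (fun z => SpE k p z (θ₀ + c)) (gaussPi k (fun j => μ j + c)))
    ∧ (⨆ x ∈ setOf (fun x : (Fin k → ℝ) × ℝ => x.2 ≤ thetaBar x.1),
          quantile (gaussPi k x.1) (fun z => SpE k p z x.2) (1 - α))
        = quantile (gaussPi k (fun _ => 0)) (fun z => SpE k p z 0) (1 - α) := by
  have hFin : Nonempty (Fin k) := ⟨⟨0, hk⟩⟩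
  obtain ⟨hα0, hα1⟩ := hα
  -- Part 1: translation invariance
  have part1 : ∀ (μ : Fin k → ℝ) (θ₀ c : ℝ),
      Measure.map (fun z => SpE k p z θ₀) (gaussPi k μ)
        = Measure.map (fun z => SpE k p z (θ₀ + c)) (gaussPi k (fun j => μ j + c)) := by
    intro μ θ₀ c
    have h1 : gaussPi k (fun j => μ j + c)
        = Measure.map (fun (z : Fin k → ℝ) j => z j + (fun _ => c) j) (gaussPi k μ) :=
      gaussPi_shift μ (fun _ => c)
    rw [h1, Measure.map_map (SpE_measurable hk p _) (shift_measurable (fun _ => c))]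
    congr 1
    funext z
    exact (SpE_shift p z θ₀ c).symm
  refine ⟨part1, ?_⟩
  -- abbreviations
  set S0 : (Fin k → ℝ) → ℝ := fun z => SpE k p z 0 with hS0
  set T : (Fin k → ℝ) → Set ℝ :=
    fun μ => {t : ℝ | 1 - α ≤ ((gaussPi k μ) {z | S0 z ≤ t}).toReal} with hT
  have hmeasset : ∀ t : ℝ, MeasurableSet {z : Fin k → ℝ | S0 z ≤ t} := fun t =>
    measurableSet_le (SpE_measurable hk p 0) measurable_const
  -- elements of any T μ are nonnegative
  have hTnonneg : ∀ (μ : Fin k → ℝ), ∀ t ∈ T μ, (0 : ℝ) ≤ t := by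
    intro μ t ht
    by_contra h
    push_neg at h
    have hempty : {z : Fin k → ℝ | S0 z ≤ t} = ∅ := by
      ext z
      simp only [Set.mem_setOf_eq, Set.mem_empty_iff_false, iff_false, not_le]
      exact lt_of_lt_of_le h (SpE_nonneg k p z 0)
    rw [hT] at ht
    simp only [Set.mem_setOf_eq, hempty, measure_empty, ENNReal.toReal_zero] at ht
    linarith
  -- T (fun _ => 0) is nonempty
  have hTne : (T (fun _ => 0)).Nonempty := by
    set P := gaussPi k (fun _ => 0)
    have hmono : Monotone (fun n : ℕ => {z : Fin k → ℝ | S0 z ≤ (n : ℝ)}) := by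
      intro m n hmn z hz
      simp only [Set.mem_setOf_eq] at hz ⊢
      exact hz.trans (by exact_mod_cast hmn)
    have hunion : (⋃ n : ℕ, {z : Fin k → ℝ | S0 z ≤ (n : ℝ)}) = Set.univ := by
      ext z
      simp only [Set.mem_iUnion, Set.mem_setOf_eq, Set.mem_univ, iff_true]
      exact exists_nat_ge (S0 z)
    have htend : Filter.Tendsto (fun n : ℕ => P {z | S0 z ≤ (n : ℝ)}) Filter.atTop
        (nhds (P (⋃ n : ℕ, {z : Fin k → ℝ | S0 z ≤ (n : ℝ)}))) :=
      tendsto_measure_iUnion_atTop hmono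
    rw [hunion, measure_univ] at htend
    have hlt : ENNReal.ofReal (1 - α) < 1 := ENNReal.ofReal_lt_one.mpr (by linarith)
    obtain ⟨n, hn⟩ := (htend.eventually_const_lt hlt).exists
    refine ⟨(n : ℝ), ?_⟩
    rw [hT]
    simp only [Set.mem_setOf_eq]
    rw [← ENNReal.ofReal_le_iff_le_toReal (measure_ne_top _ _)]
    exact hn.le
  have hQ00 : quantile (gaussPi k (fun _ => 0)) (fun z => SpE k p z 0) (1 - α)
      = sInf (T (fun _ => 0)) := rfl
  set Q00 := sInf (T (fun _ => 0)) with hQ00def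
  have hQ00nonneg : 0 ≤ Q00 := Real.sInf_nonneg (hTnonneg _)
  -- key comparison
  have key : ∀ x ∈ setOf (fun x : (Fin k → ℝ) × ℝ => x.2 ≤ thetaBar x.1),
      quantile (gaussPi k x.1) (fun z => SpE k p z x.2) (1 - α) ≤ Q00 := by
    rintro ⟨μ, θ₀⟩ hx
    change θ₀ ≤ thetaBar μ at hx
    set ν : Fin k → ℝ := fun j => μ j + (-θ₀) with hν
    have hνpos : ∀ j, 0 ≤ ν j := by
      intro j
      have : θ₀ ≤ μ j := hx.trans (ciInf_le (Finite.bddBelow_range _) j)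
      simp only [hν]; linarith
    -- rewrite the quantile via the pushforward measure and apply part 1
    have hquant : ∀ (μ' : Fin k → ℝ) (θ : ℝ),
        quantile (gaussPi k μ') (fun z => SpE k p z θ) (1 - α)
          = sInf {t : ℝ | 1 - α ≤
              ((Measure.map (fun z => SpE k p z θ) (gaussPi k μ')) (Set.Iic t)).toReal} := by
      intro μ' θ
      unfold quantile
      congr 1
      ext t
      simp only [Set.mem_setOf_eq]
      rw [Measure.map_apply (SpE_measurable hk p θ) measurableSet_Iic]
      rfl
    have e1 : quantile (gaussPi k μ) (fun z => SpE k p z θ₀) (1 - α)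
        = quantile (gaussPi k ν) (fun z => SpE k p z 0) (1 - α) := by
      rw [hquant, hquant, part1 μ θ₀ (-θ₀)]
      simp only [add_neg_cancel]
      rfl
    rw [e1]
    have e2 : quantile (gaussPi k ν) (fun z => SpE k p z 0) (1 - α) = sInf (T ν) := rfl
    rw [e2]
    -- stochastic dominance: gaussPi 0 {S0 ≤ t} ≤ gaussPi ν {S0 ≤ t}
    have hdom : ∀ t : ℝ,
        (gaussPi k (fun _ => 0)) {z | S0 z ≤ t} ≤ (gaussPi k ν) {z | S0 z ≤ t} := by
      intro t
      have hshift : gaussPi k ν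
          = Measure.map (fun (z : Fin k → ℝ) j => z j + ν j) (gaussPi k (fun _ => 0)) := by
        have h := gaussPi_shift (fun _ => (0 : ℝ)) ν
        simpa using h
      rw [hshift, Measure.map_apply (shift_measurable ν) (hmeasset t)]
      apply measure_mono
      intro z hz
      simp only [Set.mem_preimage, Set.mem_setOf_eq] at hz ⊢
      exact (SpE_anti hk p 0 hνpos).trans hz
    have hsub : T (fun _ => 0) ⊆ T ν := by
      intro t ht
      rw [hT] at ht ⊢
      simp only [Set.mem_setOf_eq] at ht ⊢
      exact ht.trans (ENNReal.toReal_mono (measure_ne_top _ _) (hdom t))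
    exact csInf_le_csInf ⟨0, fun t ht => hTnonneg ν t ht⟩ hTne hsub
  -- conclude
  rw [hQ00]
  apply le_antisymm
  · exact Real.iSup_le (fun x => Real.iSup_le (fun hx => key x hx) hQ00nonneg) hQ00nonneg
  · have hmem : ((fun _ => (0 : ℝ)) , (0 : ℝ)) ∈
        setOf (fun x : (Fin k → ℝ) × ℝ => x.2 ≤ thetaBar x.1) := by
      show (0:ℝ) ≤ thetaBar (fun _ : Fin k => (0:ℝ))
      simp [thetaBar]
    have hbdd : BddAbove (Set.range fun x : (Fin k → ℝ) × ℝ =>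
        ⨆ _ : x ∈ setOf (fun x : (Fin k → ℝ) × ℝ => x.2 ≤ thetaBar x.1),
          quantile (gaussPi k x.1) (fun z => SpE k p z x.2) (1 - α)) := by
      refine ⟨Q00, ?_⟩
      rintro _ ⟨x, rfl⟩
      exact Real.iSup_le (fun hx => key x hx) hQ00nonneg
    calc Q00 = ⨆ _ : ((fun _ => (0 : ℝ)), (0 : ℝ)) ∈
          setOf (fun x : (Fin k → ℝ) × ℝ => x.2 ≤ thetaBar x.1),
          quantile (gaussPi k (fun _ => (0 : ℝ))) (fun z => SpE k p z 0) (1 - α) := by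
            rw [ciSup_pos hmem, hQ00]
      _ ≤ _ := le_ciSup hbdd ((fun _ => (0 : ℝ)), (0 : ℝ))
end

section
/- For 1 ≤ p < q ≤ ∞ and k ≥ 2, the (1-α)-quantile c_{p,α} of S_p(Z,0) = (Σ_{j=1}^k (−Z_j)₊^p)^{1/p} under Z ~ N(0, I_k) is strictly decreasing in p: c_{q,α} < c_{p,α}, for any α ∈ (0, 1/2]. -/
open MeasureTheory ProbabilityTheory
open scoped ENNReal NNReal

section norms
variable {k : ℕ} {x : Fin k → ℝ} {t u : ℝ}

/-- `M^t = ∑ x^t` where `M = (∑ x^t)^(1/t)`. -/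
private lemma Mt_eq (ht : 0 < t) (hx : ∀ j, 0 ≤ x j) :
    ((∑ j, x j ^ t) ^ (1/t)) ^ t = ∑ j, x j ^ t := by
  rw [one_div, Real.rpow_inv_rpow (Finset.sum_nonneg fun j _ => Real.rpow_nonneg (hx j) t) ht.ne']

private lemma le_M (ht : 0 < t) (hx : ∀ j, 0 ≤ x j) (j : Fin k) :
    x j ≤ (∑ i, x i ^ t) ^ (1/t) := by
  have hM0 : 0 ≤ (∑ i, x i ^ t) ^ (1/t) := Real.rpow_nonneg
    (Finset.sum_nonneg fun i _ => Real.rpow_nonneg (hx i) t) _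
  rw [← Real.rpow_le_rpow_iff (hx j) hM0 ht, Mt_eq ht hx]
  exact Finset.single_le_sum (fun i _ => Real.rpow_nonneg (hx i) t) (Finset.mem_univ j)

lemma sum_rpow_le (ht : 0 < t) (htu : t ≤ u) (hx : ∀ j, 0 ≤ x j) :
    (∑ j, x j ^ u) ^ (1/u) ≤ (∑ j, x j ^ t) ^ (1/t) := by
  set M := (∑ j, x j ^ t) ^ (1/t) with hM
  have hu : 0 < u := lt_of_lt_of_le ht htu
  have hM0 : 0 ≤ M := Real.rpow_nonneg
    (Finset.sum_nonneg fun i _ => Real.rpow_nonneg (hx i) t) _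
  have key : ∑ j, x j ^ u ≤ M ^ u := by
    have : ∀ j ∈ Finset.univ, x j ^ u ≤ x j ^ t * M ^ (u - t) := by
      intro j _
      rcases eq_or_lt_of_le (hx j) with h0 | h0
      · rw [← h0, Real.zero_rpow hu.ne', Real.zero_rpow ht.ne', zero_mul]
      · calc x j ^ u = x j ^ t * x j ^ (u - t) := by
              rw [← Real.rpow_add h0]; ring_nf
          _ ≤ x j ^ t * M ^ (u - t) := by
              exact mul_le_mul_of_nonneg_left
                (Real.rpow_le_rpow (hx j) (le_M ht hx j) (by linarith))
                (Real.rpow_nonneg (hx j) t)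
    calc ∑ j, x j ^ u ≤ ∑ j, x j ^ t * M ^ (u - t) := Finset.sum_le_sum this
      _ = (∑ j, x j ^ t) * M ^ (u - t) := by rw [Finset.sum_mul]
      _ = M ^ t * M ^ (u - t) := by rw [Mt_eq ht hx]
      _ = M ^ u := by
          rcases eq_or_lt_of_le hM0 with h0 | h0
          · rw [← h0]
            rcases eq_or_lt_of_le htu with h1 | h1
            · rw [h1, sub_self, Real.rpow_zero, mul_one]
            · rw [Real.zero_rpow ht.ne', Real.zero_rpow hu.ne', zero_mul]
          · rw [← Real.rpow_add h0]; ring_nf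
  calc (∑ j, x j ^ u) ^ (1/u) ≤ (M ^ u) ^ (1/u) :=
        Real.rpow_le_rpow (Finset.sum_nonneg fun i _ => Real.rpow_nonneg (hx i) u) key
          (by positivity)
    _ = M := by rw [one_div, Real.rpow_rpow_inv hM0 hu.ne']

lemma sum_rpow_lt (ht : 0 < t) (htu : t < u) (hx : ∀ j, 0 ≤ x j)
    {i0 i1 : Fin k} (hne : i0 ≠ i1) (h0 : 0 < x i0) (h1 : 0 < x i1) :
    (∑ j, x j ^ u) ^ (1/u) < (∑ j, x j ^ t) ^ (1/t) := by
  set M := (∑ j, x j ^ t) ^ (1/t) with hM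
  have hu : 0 < u := lt_trans ht htu
  have hsum_pos : 0 < ∑ j, x j ^ t :=
    lt_of_lt_of_le (Real.rpow_pos_of_pos h0 t) (Finset.single_le_sum
      (fun i _ => Real.rpow_nonneg (hx i) t) (Finset.mem_univ i0))
  have hMpos : 0 < M := Real.rpow_pos_of_pos hsum_pos _
  -- each x j < M, in particular x i0 < M
  have hlt : ∀ j, 0 < x j → x j < M := by
    intro j hj
    have hother : ∃ i, i ≠ j ∧ 0 < x i := by
      rcases eq_or_ne j i0 with rfl | hji0
      · exact ⟨i1, fun h => hne h.symm, h1⟩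
      · exact ⟨i0, hji0.symm, h0⟩
    obtain ⟨i, hij, hi⟩ := hother
    rw [← Real.rpow_lt_rpow_iff (hx j) hMpos.le ht, Mt_eq ht hx]
    calc x j ^ t < x j ^ t + x i ^ t := by
          have := Real.rpow_pos_of_pos hi t; linarith
      _ = ∑ l ∈ ({j, i} : Finset (Fin k)), x l ^ t := by
          rw [Finset.sum_pair (fun h => hij h.symm)]
      _ ≤ ∑ l, x l ^ t := Finset.sum_le_sum_of_subset_of_nonneg
          (Finset.subset_univ _) (fun l _ _ => Real.rpow_nonneg (hx l) t)
  have key : ∑ j, x j ^ u < M ^ u := by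
    have hterm : ∀ j ∈ Finset.univ, x j ^ u ≤ x j ^ t * M ^ (u - t) := by
      intro j _
      rcases eq_or_lt_of_le (hx j) with h0' | h0'
      · rw [← h0', Real.zero_rpow hu.ne', Real.zero_rpow ht.ne', zero_mul]
      · calc x j ^ u = x j ^ t * x j ^ (u - t) := by rw [← Real.rpow_add h0']; ring_nf
          _ ≤ x j ^ t * M ^ (u - t) := mul_le_mul_of_nonneg_left
              (Real.rpow_le_rpow (hx j) (le_M ht hx j) (by linarith))
              (Real.rpow_nonneg (hx j) t)
    have hstrict : x i0 ^ u < x i0 ^ t * M ^ (u - t) := by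
      calc x i0 ^ u = x i0 ^ t * x i0 ^ (u - t) := by rw [← Real.rpow_add h0]; ring_nf
        _ < x i0 ^ t * M ^ (u - t) := by
            apply mul_lt_mul_of_pos_left
              (Real.rpow_lt_rpow (hx i0) (hlt i0 h0) (by linarith))
              (Real.rpow_pos_of_pos h0 t)
    calc ∑ j, x j ^ u < ∑ j, x j ^ t * M ^ (u - t) :=
          Finset.sum_lt_sum hterm ⟨i0, Finset.mem_univ i0, hstrict⟩
      _ = (∑ j, x j ^ t) * M ^ (u - t) := by rw [Finset.sum_mul]
      _ = M ^ t * M ^ (u - t) := by rw [Mt_eq ht hx]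
      _ = M ^ u := by rw [← Real.rpow_add hMpos]; ring_nf
  calc (∑ j, x j ^ u) ^ (1/u) < (M ^ u) ^ (1/u) :=
        Real.rpow_lt_rpow (Finset.sum_nonneg fun i _ => Real.rpow_nonneg (hx i) u) key
          (by positivity)
    _ = M := by rw [one_div, Real.rpow_rpow_inv hMpos.le hu.ne']

lemma sup_le_M (hk : k ≠ 0) (ht : 0 < t) (hx : ∀ j, 0 ≤ x j) :
    (⨆ j, x j) ≤ (∑ i, x i ^ t) ^ (1/t) := by
  haveI : Nonempty (Fin k) := ⟨⟨0, Nat.pos_of_ne_zero hk⟩⟩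
  exact ciSup_le fun j => le_M ht hx j

lemma sup_lt_M (ht : 0 < t) (hx : ∀ j, 0 ≤ x j)
    {i0 i1 : Fin k} (hne : i0 ≠ i1) (h0 : 0 < x i0) (h1 : 0 < x i1) :
    (⨆ j, x j) < (∑ i, x i ^ t) ^ (1/t) := by
  haveI : Nonempty (Fin k) := ⟨i0⟩
  obtain ⟨j, hj⟩ := Finite.exists_max x
  have hsup : (⨆ j, x j) = x j :=
    le_antisymm (ciSup_le hj) (le_ciSup (Set.Finite.bddAbove (Set.finite_range x)) j)
  rw [hsup]
  set M := (∑ i, x i ^ t) ^ (1/t) with hM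
  have hsum_pos : 0 < ∑ i, x i ^ t :=
    lt_of_lt_of_le (Real.rpow_pos_of_pos h0 t) (Finset.single_le_sum
      (fun i _ => Real.rpow_nonneg (hx i) t) (Finset.mem_univ i0))
  have hMpos : 0 < M := Real.rpow_pos_of_pos hsum_pos _
  have hother : ∃ i, i ≠ j ∧ 0 < x i := by
    rcases eq_or_ne j i0 with rfl | hji0
    · exact ⟨i1, fun h => hne h.symm, h1⟩
    · exact ⟨i0, hji0.symm, h0⟩
  obtain ⟨i, hij, hi⟩ := hother
  have hxj : 0 < x j := lt_of_lt_of_le h0 (hj i0)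
  rw [← Real.rpow_lt_rpow_iff (hx j) hMpos.le ht, Mt_eq ht hx]
  calc x j ^ t < x j ^ t + x i ^ t := by
        have := Real.rpow_pos_of_pos hi t; linarith
    _ = ∑ l ∈ ({j, i} : Finset (Fin k)), x l ^ t := by
        rw [Finset.sum_pair (fun h => hij h.symm)]
    _ ≤ ∑ l, x l ^ t := Finset.sum_le_sum_of_subset_of_nonneg
        (Finset.subset_univ _) (fun l _ _ => Real.rpow_nonneg (hx l) t)

end norms

section spe
variable {k : ℕ} {p q : ℝ≥0∞} {z : Fin k → ℝ}

lemma spe_ne_top (hp : p ≠ ∞) (z : Fin k → ℝ) :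
    SpE k p z 0 = (∑ j, (max (0 - z j) 0) ^ p.toReal) ^ (1 / p.toReal) := if_neg hp

lemma spe_top (z : Fin k → ℝ) : SpE k ∞ z 0 = ⨆ j, max (0 - z j) 0 := if_pos rfl

lemma hx_nonneg (z : Fin k → ℝ) : ∀ j, 0 ≤ max (0 - z j) 0 := fun j => le_max_right _ _

lemma spe_nonneg (p : ℝ≥0∞) (z : Fin k → ℝ) : 0 ≤ SpE k p z 0 := by
  rcases eq_or_ne p ∞ with rfl | hp
  · rw [spe_top]; exact Real.iSup_nonneg fun j => le_max_right _ _
  · rw [spe_ne_top hp]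
    exact Real.rpow_nonneg (Finset.sum_nonneg fun j _ =>
      Real.rpow_nonneg (hx_nonneg z j) _) _

lemma spe_continuous_of_ne_top (hp : p ≠ ∞) (ht : 0 < p.toReal) :
    Continuous fun z : Fin k → ℝ => SpE k p z 0 := by
  simp only [spe_ne_top hp]
  have h1 : Continuous fun x : ℝ => x ^ p.toReal :=
    continuous_iff_continuousAt.2 fun x => Real.continuousAt_rpow_const x _ (Or.inr ht.le)
  have h2 : Continuous fun x : ℝ => x ^ (1 / p.toReal) :=
    continuous_iff_continuousAt.2 fun x => Real.continuousAt_rpow_const x _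
      (Or.inr (by positivity))
  exact h2.comp (continuous_finset_sum _ fun j _ =>
    h1.comp ((continuous_const.sub (continuous_apply j)).max continuous_const))

lemma spe_measurable (p : ℝ≥0∞) (h : p = ∞ ∨ 0 < p.toReal) :
    Measurable fun z : Fin k → ℝ => SpE k p z 0 := by
  rcases eq_or_ne p ∞ with rfl | hp
  · simp only [spe_top]
    exact Measurable.iSup fun j =>
      ((measurable_const.sub (measurable_pi_apply j)).max measurable_const)
  · exact (spe_continuous_of_ne_top hp (h.resolve_left hp)).measurable

lemma spe_le_spe (hk : k ≠ 0) (hp : 1 ≤ p) (hpq : p < q) (z : Fin k → ℝ) :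
    SpE k q z 0 ≤ SpE k p z 0 := by
  have hpt : p ≠ ∞ := hpq.ne_top
  have ht1 : 1 ≤ p.toReal := by
    rw [← ENNReal.toReal_one]; exact ENNReal.toReal_mono hpt hp
  have ht0 : 0 < p.toReal := lt_of_lt_of_le one_pos ht1
  rcases eq_or_ne q ∞ with rfl | hq
  · rw [spe_top, spe_ne_top hpt]
    exact sup_le_M hk ht0 (hx_nonneg z)
  · rw [spe_ne_top hq, spe_ne_top hpt]
    exact sum_rpow_le ht0 (ENNReal.toReal_mono hq hpq.le) (hx_nonneg z)

lemma spe_lt_spe (hp : 1 ≤ p) (hpq : p < q) {i0 i1 : Fin k} (hne : i0 ≠ i1)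
    (h0 : z i0 < 0) (h1 : z i1 < 0) :
    SpE k q z 0 < SpE k p z 0 := by
  have hpt : p ≠ ∞ := hpq.ne_top
  have ht1 : 1 ≤ p.toReal := by
    rw [← ENNReal.toReal_one]; exact ENNReal.toReal_mono hpt hp
  have ht0 : 0 < p.toReal := lt_of_lt_of_le one_pos ht1
  have hx0 : 0 < max (0 - z i0) 0 := lt_max_iff.2 (Or.inl (by linarith))
  have hx1 : 0 < max (0 - z i1) 0 := lt_max_iff.2 (Or.inl (by linarith))
  rcases eq_or_ne q ∞ with rfl | hq
  · rw [spe_top, spe_ne_top hpt]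
    exact sup_lt_M ht0 (hx_nonneg z) hne hx0 hx1
  · rw [spe_ne_top hq, spe_ne_top hpt]
    have htu : p.toReal < q.toReal := (ENNReal.toReal_lt_toReal hpt hq).2 hpq
    exact sum_rpow_lt ht0 htu (hx_nonneg z) hne hx0 hx1

lemma spe_const (hp : p ≠ ∞) (ht : 0 < p.toReal) {s : ℝ} (hs : 0 ≤ s) :
    SpE k p (fun _ => -s) 0 = (k : ℝ) ^ (1 / p.toReal) * s := by
  rw [spe_ne_top hp]
  have hmax : max (0 - -s) 0 = s := by rw [zero_sub, neg_neg]; exact max_eq_left hs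
  simp only [hmax]
  rw [Finset.sum_const, Finset.card_univ, Fintype.card_fin, nsmul_eq_mul,
    Real.mul_rpow (by positivity) (Real.rpow_nonneg hs _), one_div,
    Real.rpow_rpow_inv hs ht.ne']

lemma spe_const_top (hk : k ≠ 0) {s : ℝ} (hs : 0 ≤ s) :
    SpE k ∞ (fun _ => -s) 0 = s := by
  haveI : Nonempty (Fin k) := ⟨⟨0, Nat.pos_of_ne_zero hk⟩⟩
  rw [spe_top]
  have hmax : max (0 - -(s : ℝ)) 0 = s := by
    rw [zero_sub, neg_neg]; exact max_eq_left hs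
  simp only [hmax, ciSup_const]

lemma sup_lt_iff_forall (hk : k ≠ 0) {x : Fin k → ℝ} {c : ℝ} :
    (⨆ j, x j) < c ↔ ∀ j, x j < c := by
  haveI : Nonempty (Fin k) := ⟨⟨0, Nat.pos_of_ne_zero hk⟩⟩
  constructor
  · intro h j
    exact lt_of_le_of_lt (le_ciSup (Set.Finite.bddAbove (Set.finite_range x)) j) h
  · intro h
    obtain ⟨j, hj⟩ := Finite.exists_max x
    exact lt_of_le_of_lt (ciSup_le hj) (h j)

end spe

section gauss

local notation "g" => gaussianReal 0 1

lemma gauss_singleton (a : ℝ) : g {a} = 0 :=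
  gaussianReal_absolutelyContinuous 0 one_ne_zero (Real.volume_singleton)

lemma gauss_pos_of_Ioo {a b : ℝ} (hab : a < b) : g (Set.Ioo a b) ≠ 0 := by
  intro h
  have := gaussianReal_absolutelyContinuous' 0 one_ne_zero h
  rw [Real.volume_Ioo] at this
  exact (ENNReal.ofReal_pos.2 (by linarith)).ne' this

lemma gauss_Ici_zero : g (Set.Ici (0:ℝ)) = 2⁻¹ := by
  have hmap : (g).map (fun x => (-1 : ℝ) * x) = g := by
    rw [gaussianReal_map_const_mul (-1)]
    norm_num
  have hIic : g (Set.Iic (0:ℝ)) = g (Set.Ici (0:ℝ)) := by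
    conv_rhs => rw [← hmap]
    rw [Measure.map_apply (by fun_prop) measurableSet_Ici]
    congr 1
    ext x
    simp only [Set.mem_preimage, Set.mem_Ici, Set.mem_Iic]
    constructor <;> intro h <;> nlinarith
  have hIoi : g (Set.Ioi (0:ℝ)) = g (Set.Ici (0:ℝ)) := by
    have h1 : Set.Ici (0:ℝ) = {0} ∪ Set.Ioi 0 := by
      ext x; simp [le_iff_lt_or_eq, or_comm, eq_comm]
    apply le_antisymm (measure_mono Set.Ioi_subset_Ici_self)
    calc g (Set.Ici (0:ℝ)) ≤ g {0} + g (Set.Ioi 0) := h1 ▸ measure_union_le _ _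
      _ = g (Set.Ioi 0) := by rw [gauss_singleton, zero_add]
  have hsum : g (Set.Iic (0:ℝ)) + g (Set.Ioi (0:ℝ)) = 1 := by
    rw [← measure_union (by simp [Set.disjoint_left]) measurableSet_Ioi]
    rw [Set.Iic_union_Ioi, measure_univ]
  rw [hIic, hIoi] at hsum
  have h2 : (2:ℝ≥0∞) * g (Set.Ici (0:ℝ)) = 1 := by rw [two_mul]; exact hsum
  calc g (Set.Ici (0:ℝ)) = 2⁻¹ * (2 * g (Set.Ici (0:ℝ))) := by
        rw [← mul_assoc, ENNReal.inv_mul_cancel two_ne_zero ENNReal.ofNat_ne_top, one_mul]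
    _ = 2⁻¹ := by rw [h2, mul_one]

variable {k : ℕ}

lemma pi_gauss_open_pos {U : Set (Fin k → ℝ)} (hU : IsOpen U) (hne : U.Nonempty) :
    Measure.pi (fun _ : Fin k => g) U ≠ 0 := by
  obtain ⟨z₀, hz₀⟩ := hne
  obtain ⟨r, hr, hball⟩ := Metric.isOpen_iff.1 hU z₀ hz₀
  have hpi : Metric.ball z₀ r = Set.pi Set.univ (fun j => Metric.ball (z₀ j) r) :=
    ball_pi z₀ hr
  intro h0
  have hball0 : Measure.pi (fun _ : Fin k => g) (Metric.ball z₀ r) = 0 :=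
    measure_mono_null hball h0
  rw [hpi, Measure.pi_pi] at hball0
  obtain ⟨j, hj⟩ := Finset.prod_eq_zero_iff.1 hball0
  rw [Real.ball_eq_Ioo] at hj
  exact gauss_pos_of_Ioo (by linarith) hj.2

lemma pi_gauss_hyperplane (j : Fin k) (a : ℝ) :
    Measure.pi (fun _ : Fin k => g) {z | z j = a} = 0 := by
  classical
  have hset : {z : Fin k → ℝ | z j = a} =
      Set.pi Set.univ (fun i => if i = j then {a} else Set.univ) := by
    ext z
    simp only [Set.mem_setOf_eq, Set.mem_pi, Set.mem_univ, forall_true_left]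
    constructor
    · intro h i
      by_cases hij : i = j <;> simp [hij, h]
    · intro h
      have := h j
      simpa using this
  rw [hset, Measure.pi_pi]
  refine Finset.prod_eq_zero (Finset.mem_univ j) ?_
  simp [gauss_singleton]

end gauss

section main
local notation "g" => gaussianReal 0 1
variable {k : ℕ} {p q : ℝ≥0∞}

lemma spe_cylinder (hk : 2 ≤ k) (hpt : p ≠ ∞) (ht0 : 0 < p.toReal)
    {t t0 : ℝ} (htt0 : t ≤ t0) :
    Measure.pi (fun _ : Fin k => g) {z | SpE k p z 0 ≤ t}
      ≤ (g (Set.Ici (-t0))) ^ 2 := by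
  classical
  set i0 : Fin k := ⟨0, by omega⟩
  set i1 : Fin k := ⟨1, by omega⟩
  have hne : i0 ≠ i1 := by simp [i0, i1, Fin.ext_iff]
  have hsub : {z : Fin k → ℝ | SpE k p z 0 ≤ t} ⊆
      Set.pi Set.univ (fun i => if i ∈ ({i0, i1} : Finset (Fin k))
        then Set.Ici (-t0) else Set.univ) := by
    intro z hz i _
    show z i ∈ if i ∈ ({i0, i1} : Finset (Fin k)) then Set.Ici (-t0) else Set.univ
    split_ifs with hi
    · have hle : max (0 - z i) 0 ≤ SpE k p z 0 := by
        rw [spe_ne_top hpt]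
        exact le_M ht0 (hx_nonneg z) i
      have : 0 - z i ≤ t0 := le_trans (le_trans (le_max_left _ _) hle)
        (le_trans hz htt0)
      simp only [Set.mem_Ici]
      linarith
    · exact Set.mem_univ _
  calc Measure.pi (fun _ : Fin k => g) {z | SpE k p z 0 ≤ t}
      ≤ Measure.pi (fun _ : Fin k => g) (Set.pi Set.univ
        (fun i => if i ∈ ({i0, i1} : Finset (Fin k)) then Set.Ici (-t0) else Set.univ)) :=
        measure_mono hsub
    _ = ∏ i, g (if i ∈ ({i0, i1} : Finset (Fin k)) then Set.Ici (-t0) else Set.univ) :=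
        Measure.pi_pi _ _
    _ = ∏ i, (if i ∈ ({i0, i1} : Finset (Fin k)) then g (Set.Ici (-t0)) else 1) := by
        refine Finset.prod_congr rfl fun i _ => ?_
        split_ifs <;> simp
    _ = ∏ i ∈ ({i0, i1} : Finset (Fin k)), g (Set.Ici (-t0)) :=
        Fintype.prod_ite_mem _ _
    _ = (g (Set.Ici (-t0))) ^ 2 := by
        rw [Finset.prod_const, Finset.card_pair hne]

lemma exists_t0 (hk : 2 ≤ k) (hpt : p ≠ ∞) (ht0 : 0 < p.toReal)
    {α : ℝ} (hα2 : α ≤ 1 / 2) :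
    ∃ t0 : ℝ, 0 < t0 ∧ ∀ t : ℝ, t ≤ t0 →
      ((Measure.pi (fun _ : Fin k => g)) {z | SpE k p z 0 ≤ t}).toReal < 1 - α := by
  -- the measures of Ici (-(1/(n+1))) tend to g (Ici 0) = 2⁻¹
  have hanti : Antitone fun n : ℕ => Set.Ici (-(1 / ((n : ℝ) + 1))) := by
    intro n m hnm x hx
    simp only [Set.mem_Ici] at hx ⊢
    have hc : (n : ℝ) ≤ m := Nat.cast_le.2 hnm
    have h1 : (1 : ℝ) / ((m : ℝ) + 1) ≤ 1 / ((n : ℝ) + 1) :=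
      one_div_le_one_div_of_le (by positivity) (by linarith)
    linarith
  have hinter : ⋂ n : ℕ, Set.Ici (-(1 / ((n : ℝ) + 1))) = Set.Ici (0 : ℝ) := by
    ext x
    simp only [Set.mem_iInter, Set.mem_Ici]
    constructor
    · intro h
      by_contra hx
      push_neg at hx
      obtain ⟨n, hn⟩ := exists_nat_one_div_lt (show (0:ℝ) < -x by linarith)
      have := h n
      linarith
    · intro h n
      have : (0:ℝ) < 1 / ((n : ℝ) + 1) := by positivity
      linarith
  have htend := tendsto_measure_iInter_atTop (μ := g)
    (fun n => measurableSet_Ici.nullMeasurableSet) hanti ⟨0, measure_ne_top _ _⟩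
  rw [hinter, gauss_Ici_zero] at htend
  have hhalf : (2 : ℝ≥0∞)⁻¹ < ENNReal.ofReal (7 / 10) := by
    rw [ENNReal.lt_ofReal_iff_toReal_lt (by simp)]
    simp [ENNReal.toReal_inv]
    norm_num
  obtain ⟨n0, hn0⟩ := (htend.eventually (eventually_lt_nhds hhalf)).exists
  refine ⟨1 / ((n0 : ℝ) + 1), by positivity, fun t ht => ?_⟩
  have hcyl := spe_cylinder (p := p) hk hpt ht0 ht
  have hb : (g (Set.Ici (-(1 / ((n0 : ℝ) + 1))))) ^ 2
      ≤ ENNReal.ofReal (7 / 10) ^ 2 := pow_le_pow_left' hn0.le 2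
  have hle : Measure.pi (fun _ : Fin k => g) {z | SpE k p z 0 ≤ t}
      ≤ ENNReal.ofReal ((7 / 10) ^ 2) := by
    refine le_trans hcyl (le_trans hb ?_)
    rw [ENNReal.ofReal_pow (by norm_num)]
  have := ENNReal.toReal_mono (by simp) hle
  rw [ENNReal.toReal_ofReal (by norm_num)] at this
  nlinarith

end main

section main2
local notation "g" => gaussianReal 0 1
variable {k : ℕ} {p q : ℝ≥0∞}

lemma spe_both_eq_null (hk : 2 ≤ k) (hp : 1 ≤ p) (hpq : p < q) {c : ℝ} (hc : 0 < c) :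
    Measure.pi (fun _ : Fin k => g)
      {z | SpE k p z 0 = c ∧ SpE k q z 0 = c} = 0 := by
  have hpt : p ≠ ∞ := hpq.ne_top
  have ht1 : 1 ≤ p.toReal := by
    rw [← ENNReal.toReal_one]; exact ENNReal.toReal_mono hpt hp
  have ht0 : 0 < p.toReal := lt_of_lt_of_le one_pos ht1
  refine measure_mono_null ?_ (measure_iUnion_null
    (fun j : Fin k => pi_gauss_hyperplane j (-c)))
  rintro z ⟨hSp, hSq⟩
  -- there is a negative coordinate
  have hneg : ∃ j, z j < 0 := by
    by_contra h
    push_neg at h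
    have : SpE k p z 0 = 0 := by
      rw [spe_ne_top hpt]
      have hzero : ∀ j, max (0 - z j) 0 = 0 := fun j => max_eq_right (by linarith [h j])
      simp only [hzero, Real.zero_rpow ht0.ne', Finset.sum_const_zero]
      exact Real.zero_rpow (by positivity)
    rw [this] at hSp
    linarith
  obtain ⟨j, hj⟩ := hneg
  -- it is the only one
  have honly : ∀ i, i ≠ j → 0 ≤ z i := by
    intro i hij
    by_contra h
    push_neg at h
    have := spe_lt_spe (z := z) hp hpq hij h hj
    rw [hSp, hSq] at this
    exact lt_irrefl _ this
  -- compute SpE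
  have hsum : ∑ i, max (0 - z i) 0 ^ p.toReal = (-z j) ^ p.toReal := by
    rw [Finset.sum_eq_single j]
    · rw [max_eq_left (by linarith), zero_sub]
    · intro i _ hij
      rw [max_eq_right (by linarith [honly i hij]), Real.zero_rpow ht0.ne']
    · intro h
      exact absurd (Finset.mem_univ j) h
  have hval : SpE k p z 0 = -z j := by
    rw [spe_ne_top hpt, hsum, one_div, Real.rpow_rpow_inv (by linarith) ht0.ne']
  rw [hval] at hSp
  exact Set.mem_iUnion.2 ⟨j, by simp only [Set.mem_setOf_eq]; linarith⟩

lemma spe_wedge_pos (hk : 2 ≤ k) (hp : 1 ≤ p) (hpq : p < q) {c : ℝ} (hc : 0 < c) :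
    Measure.pi (fun _ : Fin k => g)
      {z | SpE k q z 0 < c ∧ c < SpE k p z 0} ≠ 0 := by
  classical
  have hk0 : k ≠ 0 := by omega
  have hpt : p ≠ ∞ := hpq.ne_top
  have ht1 : 1 ≤ p.toReal := by
    rw [← ENNReal.toReal_one]; exact ENNReal.toReal_mono hpt hp
  have ht0 : 0 < p.toReal := lt_of_lt_of_le one_pos ht1
  have hk1 : (1:ℝ) < (k:ℝ) := by exact_mod_cast by omega
  set A : ℝ := (k:ℝ) ^ (1 / p.toReal) with hA
  set B : ℝ := if q = ∞ then (1:ℝ) else (k:ℝ) ^ (1 / q.toReal) with hB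
  have hu1 : q ≠ ∞ → 1 ≤ q.toReal := fun hq => by
    rw [← ENNReal.toReal_one]; exact ENNReal.toReal_mono hq (le_trans hp hpq.le)
  have hApos : 0 < A := Real.rpow_pos_of_pos (by linarith) _
  have hBpos : 0 < B := by
    rw [hB]; split_ifs with hq
    · norm_num
    · exact Real.rpow_pos_of_pos (by linarith) _
  have hBA : B < A := by
    rw [hB, hA]; split_ifs with hq
    · rw [show (1:ℝ) = (k:ℝ) ^ (0:ℝ) from (Real.rpow_zero _).symm]
      exact (Real.rpow_lt_rpow_left_iff hk1).2 (by positivity)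
    · have htu : p.toReal < q.toReal := (ENNReal.toReal_lt_toReal hpt hq).2 hpq
      exact (Real.rpow_lt_rpow_left_iff hk1).2
        (one_div_lt_one_div_of_lt ht0 htu)
  set s : ℝ := 2 * c / (A + B) with hs
  have hABpos : 0 < A + B := by linarith
  have hspos : 0 < s := by positivity
  have hAs : A * s * (A + B) = 2 * c * A := by rw [hs]; field_simp
  have hBs : B * s * (A + B) = 2 * c * B := by rw [hs]; field_simp
  have hcAs : c < A * s := by
    rw [← mul_lt_mul_iff_of_pos_right hABpos]
    nlinarith
  have hBsc : B * s < c := by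
    rw [← mul_lt_mul_iff_of_pos_right hABpos]
    nlinarith
  set z₀ : Fin k → ℝ := fun _ => -s with hz₀
  have hSp0 : SpE k p z₀ 0 = A * s := spe_const hpt ht0 hspos.le
  have hSq0 : SpE k q z₀ 0 = B * s := by
    rw [hB]; split_ifs with hq
    · rw [hq, spe_const_top hk0 hspos.le, one_mul]
    · exact spe_const hq (by linarith [hu1 hq]) hspos.le
  -- the set is open
  have hopen_q : IsOpen {z : Fin k → ℝ | SpE k q z 0 < c} := by
    rcases eq_or_ne q ∞ with rfl | hq
    · have : {z : Fin k → ℝ | SpE k ∞ z 0 < c} =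
          ⋂ j, {z : Fin k → ℝ | max (0 - z j) 0 < c} := by
        ext z
        simp only [Set.mem_setOf_eq, Set.mem_iInter, spe_top]
        exact sup_lt_iff_forall hk0
      rw [this]
      exact isOpen_iInter_of_finite fun j =>
        (isOpen_Iio).preimage ((continuous_const.sub (continuous_apply j)).max continuous_const)
    · exact (isOpen_Iio).preimage (spe_continuous_of_ne_top hq (by linarith [hu1 hq]))
  have hopen_p : IsOpen {z : Fin k → ℝ | c < SpE k p z 0} :=
    (isOpen_Ioi).preimage (spe_continuous_of_ne_top hpt ht0)
  have hopen : IsOpen {z : Fin k → ℝ | SpE k q z 0 < c ∧ c < SpE k p z 0} := by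
    have : {z : Fin k → ℝ | SpE k q z 0 < c ∧ c < SpE k p z 0} =
        {z | SpE k q z 0 < c} ∩ {z | c < SpE k p z 0} := rfl
    rw [this]
    exact hopen_q.inter hopen_p
  exact pi_gauss_open_pos hopen ⟨z₀, ⟨by rw [hSq0]; exact hBsc, by rw [hSp0]; exact hcAs⟩⟩

end main2

/-- The `(1-α)`-quantile `c_{p,α}` of `S_p(Z, 0)` under `Z ~ N(0, I_k)` is strictly
decreasing in `p ∈ [1, ∞]`, for `k ≥ 2` and `α ∈ (0, 1/2]`. -/
theorem stmt9 (k : ℕ) (hk : 2 ≤ k) (p q : ℝ≥0∞) (hp : 1 ≤ p) (hpq : p < q)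
    (α : ℝ) (hα : 0 < α) (hα2 : α ≤ 1 / 2) :
    quantile (gaussPi k (fun _ => 0)) (fun z => SpE k q z 0) (1 - α)
      < quantile (gaussPi k (fun _ => 0)) (fun z => SpE k p z 0) (1 - α) := by
  classical
  have hk0 : k ≠ 0 := by omega
  have hpt : p ≠ ∞ := hpq.ne_top
  have ht1 : 1 ≤ p.toReal := by
    rw [← ENNReal.toReal_one]; exact ENNReal.toReal_mono hpt hp
  have ht0 : 0 < p.toReal := lt_of_lt_of_le one_pos ht1
  have hqm : q = ∞ ∨ 0 < q.toReal := by
    rcases eq_or_ne q ∞ with rfl | hq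
    · exact Or.inl rfl
    · right
      have : 1 ≤ q.toReal := by
        rw [← ENNReal.toReal_one]; exact ENNReal.toReal_mono hq (le_trans hp hpq.le)
      linarith
  set P : Measure (Fin k → ℝ) := Measure.pi (fun _ : Fin k => gaussianReal 0 1) with hPdef
  haveI : IsProbabilityMeasure P := by rw [hPdef]; infer_instance
  have hPg : gaussPi k (fun _ => 0) = P := rfl
  set Sp : (Fin k → ℝ) → ℝ := fun z => SpE k p z 0 with hSpdef
  set Sq : (Fin k → ℝ) → ℝ := fun z => SpE k q z 0 with hSqdef
  have hgoal : quantile (gaussPi k (fun _ => 0)) (fun z => SpE k q z 0) (1 - α)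
      = sInf {t : ℝ | 1 - α ≤ (P {z | Sq z ≤ t}).toReal} := rfl
  have hgoal' : quantile (gaussPi k (fun _ => 0)) (fun z => SpE k p z 0) (1 - α)
      = sInf {t : ℝ | 1 - α ≤ (P {z | Sp z ≤ t}).toReal} := rfl
  rw [hgoal, hgoal']
  set Tq := {t : ℝ | 1 - α ≤ (P {z | Sq z ≤ t}).toReal} with hTq
  set Tp := {t : ℝ | 1 - α ≤ (P {z | Sp z ≤ t}).toReal} with hTp
  have h1α1 : 1 - α < 1 := by linarith
  have h1α0 : 0 < 1 - α := by linarith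
  have hmeasp : ∀ a : ℝ, MeasurableSet {z | Sp z ≤ a} := fun a =>
    measurableSet_le (spe_measurable p (Or.inr ht0)) measurable_const
  have hmeasq : ∀ a : ℝ, MeasurableSet {z | Sq z ≤ a} := fun a =>
    measurableSet_le (spe_measurable q hqm) measurable_const
  -- Tp is nonempty
  have hTp_ne : Tp.Nonempty := by
    have hmono : Monotone fun n : ℕ => {z : Fin k → ℝ | Sp z ≤ (n : ℝ)} := by
      intro n m hnm z hz
      simp only [Set.mem_setOf_eq] at hz ⊢
      exact le_trans hz (Nat.cast_le.2 hnm)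
    have hunion : ⋃ n : ℕ, {z : Fin k → ℝ | Sp z ≤ (n : ℝ)} = Set.univ := by
      refine Set.eq_univ_of_forall fun z => ?_
      obtain ⟨n, hn⟩ := exists_nat_ge (Sp z)
      exact Set.mem_iUnion.2 ⟨n, hn⟩
    have ht := tendsto_measure_iUnion_atTop (μ := P) hmono
    rw [hunion, measure_univ] at ht
    have ht' : Filter.Tendsto (fun n : ℕ => (P {z | Sp z ≤ (n : ℝ)}).toReal)
        Filter.atTop (nhds 1) := by
      have := (ENNReal.tendsto_toReal ENNReal.one_ne_top).comp ht
      simpa [Function.comp_def] using this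
    obtain ⟨n, hn⟩ := (ht'.eventually (eventually_gt_nhds h1α1)).exists
    exact ⟨n, le_of_lt hn⟩
  -- both sets are bounded below by 0
  have hlb : ∀ (S : (Fin k → ℝ) → ℝ), (∀ z, 0 ≤ S z) →
      ∀ t ∈ {t : ℝ | 1 - α ≤ (P {z | S z ≤ t}).toReal}, (0:ℝ) ≤ t := by
    intro S hS t htmem
    by_contra hneg
    push_neg at hneg
    have hempty : {z : Fin k → ℝ | S z ≤ t} = ∅ :=
      Set.eq_empty_of_forall_notMem fun z hz => by
        simp only [Set.mem_setOf_eq] at hz; linarith [hS z]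
    rw [Set.mem_setOf_eq, hempty] at htmem
    simp only [measure_empty, ENNReal.toReal_zero] at htmem
    linarith
  have hbddp : BddBelow Tp := ⟨0, fun t ht => hlb Sp (fun z => spe_nonneg p z) t ht⟩
  have hbddq : BddBelow Tq := ⟨0, fun t ht => hlb Sq (fun z => spe_nonneg q z) t ht⟩
  set c : ℝ := sInf Tp with hc
  -- c is positive
  have hcpos : 0 < c := by
    obtain ⟨t0, ht0pos, ht0prop⟩ := exists_t0 (p := p) hk hpt ht0 hα2
    have : t0 ≤ c := le_csInf hTp_ne fun t ht => by
      by_contra hlt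
      push_neg at hlt
      exact absurd ht (by simp only [hTp, Set.mem_setOf_eq, not_le]; exact ht0prop t hlt.le)
    linarith
  -- 1 - α ≤ F_p(c)
  have hFc : ENNReal.ofReal (1 - α) ≤ P {z | Sp z ≤ c} := by
    have hanti : Antitone fun n : ℕ => {z : Fin k → ℝ | Sp z ≤ c + 1 / ((n : ℝ) + 1)} := by
      intro n m hnm z hz
      have hcast : (n : ℝ) ≤ m := Nat.cast_le.2 hnm
      have : (1:ℝ) / ((m:ℝ) + 1) ≤ 1 / ((n:ℝ) + 1) :=
        one_div_le_one_div_of_le (by positivity) (by linarith)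
      simp only [Set.mem_setOf_eq] at hz ⊢
      linarith
    have hinter : ⋂ n : ℕ, {z : Fin k → ℝ | Sp z ≤ c + 1 / ((n : ℝ) + 1)}
        = {z | Sp z ≤ c} := by
      ext z
      simp only [Set.mem_iInter, Set.mem_setOf_eq]
      constructor
      · intro h
        by_contra hzc
        push_neg at hzc
        obtain ⟨n, hn⟩ := exists_nat_one_div_lt (show (0:ℝ) < Sp z - c by linarith)
        linarith [h n]
      · intro h n
        have : (0:ℝ) < 1 / ((n:ℝ) + 1) := by positivity
        linarith
    have htend := tendsto_measure_iInter_atTop (μ := P)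
      (fun n => (hmeasp _).nullMeasurableSet) hanti ⟨0, measure_ne_top _ _⟩
    rw [hinter] at htend
    refine ge_of_tendsto htend (Filter.Eventually.of_forall fun n => ?_)
    have hεpos : (0:ℝ) < 1 / ((n:ℝ) + 1) := by positivity
    obtain ⟨t, htmem, htlt⟩ := (csInf_lt_iff hbddp hTp_ne).1
      (show c < c + 1 / ((n:ℝ) + 1) by linarith)
    have hsub : {z : Fin k → ℝ | Sp z ≤ t} ⊆ {z | Sp z ≤ c + 1 / ((n:ℝ) + 1)} :=
      fun z hz => le_trans hz (le_of_lt htlt)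
    have := le_trans (ENNReal.ofReal_le_of_le_toReal htmem) (measure_mono hsub)
    exact this
  -- combine
  have hUne : P {z | Sq z < c ∧ c < Sp z} ≠ 0 := spe_wedge_pos hk hp hpq hcpos
  have hnull : P {z | Sp z = c ∧ Sq z = c} = 0 := spe_both_eq_null hk hp hpq hcpos
  have hsub1 : {z : Fin k → ℝ | Sp z ≤ c} ⊆
      {z | Sp z ≤ c ∧ Sq z < c} ∪ {z | Sp z = c ∧ Sq z = c} := by
    intro z hz
    simp only [Set.mem_setOf_eq] at hz
    have hzq : Sq z ≤ Sp z := spe_le_spe hk0 hp hpq z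
    rcases lt_or_eq_of_le (le_trans hzq hz) with h | h
    · exact Or.inl ⟨hz, h⟩
    · exact Or.inr ⟨le_antisymm hz (h ▸ hzq), h⟩
  have h1 : P {z | Sp z ≤ c} ≤ P {z | Sp z ≤ c ∧ Sq z < c} := by
    calc P {z | Sp z ≤ c} ≤ P ({z | Sp z ≤ c ∧ Sq z < c} ∪ {z | Sp z = c ∧ Sq z = c}) :=
          measure_mono hsub1
      _ ≤ P {z | Sp z ≤ c ∧ Sq z < c} + P {z | Sp z = c ∧ Sq z = c} := measure_union_le _ _
      _ = P {z | Sp z ≤ c ∧ Sq z < c} := by rw [hnull, add_zero]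
  have hdisj : Disjoint {z : Fin k → ℝ | Sp z ≤ c ∧ Sq z < c}
      {z | Sq z < c ∧ c < Sp z} := by
    rw [Set.disjoint_left]
    rintro z ⟨hz1, _⟩ ⟨_, hz2⟩
    exact absurd hz1 (not_le.2 hz2)
  have hmeasU : MeasurableSet {z : Fin k → ℝ | Sq z < c ∧ c < Sp z} := by
    have : {z : Fin k → ℝ | Sq z < c ∧ c < Sp z} =
        {z | Sq z < c} ∩ {z | c < Sp z} := rfl
    rw [this]
    exact (measurableSet_lt (spe_measurable q hqm) measurable_const).inter
      (measurableSet_lt measurable_const (spe_measurable p (Or.inr ht0)))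
  have h2 : P {z | Sp z ≤ c ∧ Sq z < c} + P {z | Sq z < c ∧ c < Sp z}
      ≤ P {z | Sq z < c} := by
    rw [← measure_union hdisj hmeasU]
    refine measure_mono ?_
    rintro z (⟨_, hz⟩ | ⟨hz, _⟩) <;> exact hz
  have hkey : ENNReal.ofReal (1 - α) < P {z | Sq z < c} := by
    calc ENNReal.ofReal (1 - α) < ENNReal.ofReal (1 - α) + P {z | Sq z < c ∧ c < Sp z} :=
          ENNReal.lt_add_right ENNReal.ofReal_ne_top hUne
      _ ≤ P {z | Sp z ≤ c} + P {z | Sq z < c ∧ c < Sp z} := add_le_add_left hFc _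
      _ ≤ P {z | Sp z ≤ c ∧ Sq z < c} + P {z | Sq z < c ∧ c < Sp z} := add_le_add_left h1 _
      _ ≤ P {z | Sq z < c} := h2
  -- approximate from the left
  have hmono : Monotone fun n : ℕ => {z : Fin k → ℝ | Sq z ≤ c - 1 / ((n : ℝ) + 1)} := by
    intro n m hnm z hz
    have hcast : (n : ℝ) ≤ m := Nat.cast_le.2 hnm
    have : (1:ℝ) / ((m:ℝ) + 1) ≤ 1 / ((n:ℝ) + 1) :=
      one_div_le_one_div_of_le (by positivity) (by linarith)
    simp only [Set.mem_setOf_eq] at hz ⊢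
    linarith
  have hunion : ⋃ n : ℕ, {z : Fin k → ℝ | Sq z ≤ c - 1 / ((n : ℝ) + 1)}
      = {z | Sq z < c} := by
    ext z
    simp only [Set.mem_iUnion, Set.mem_setOf_eq]
    constructor
    · rintro ⟨n, hn⟩
      have : (0:ℝ) < 1 / ((n:ℝ) + 1) := by positivity
      linarith
    · intro h
      obtain ⟨n, hn⟩ := exists_nat_one_div_lt (show (0:ℝ) < c - Sq z by linarith)
      exact ⟨n, by linarith⟩
  have htendq := tendsto_measure_iUnion_atTop (μ := P) hmono
  rw [hunion] at htendq
  obtain ⟨n, hn⟩ := (htendq.eventually (eventually_gt_nhds hkey)).exists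
  have hmem : c - 1 / ((n:ℝ) + 1) ∈ Tq := by
    rw [hTq, Set.mem_setOf_eq]
    have h' := ENNReal.toReal_mono (measure_ne_top P _) (le_of_lt hn)
    rw [ENNReal.toReal_ofReal (by linarith)] at h'
    exact h'
  calc sInf Tq ≤ c - 1 / ((n:ℝ) + 1) := csInf_le hbddq hmem
    _ < c := by
      have : (0:ℝ) < 1 / ((n:ℝ) + 1) := by positivity
      linarith
end

section
/- For any ε > 0 and fixed α ∈ (0, 1/2], the minimax power of the sup test β_{θ₀,∞}(√((2+ε) log k); k) = 1 - Φ(c_{∞,α,k} - √((2+ε) log k)) converges to 1 as k → ∞. -/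
open MeasureTheory ProbabilityTheory
open scoped ENNReal NNReal

/-- Standard normal cdf `Φ`. -/
noncomputable def Phi (x : ℝ) : ℝ := (gaussianReal 0 1 (Set.Iic x)).toReal

/- ### Auxiliary lemmas -/

lemma mgf_aux (s : ℝ) :
    ∫⁻ x, ENNReal.ofReal (Real.exp (s * x)) ∂(gaussianReal 0 1) =
      ENNReal.ofReal (Real.exp (s ^ 2 / 2)) := by
  have hg : Measurable fun x : ℝ => ENNReal.ofReal (Real.exp (s * x)) := by fun_prop
  rw [gaussianReal_of_var_ne_zero 0 one_ne_zero,
    lintegral_withDensity_eq_lintegral_mul _ (measurable_gaussianPDF 0 1) hg]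
  have h : ∀ x : ℝ, (gaussianPDF 0 1 * fun x => ENNReal.ofReal (Real.exp (s * x))) x
      = ENNReal.ofReal (Real.exp (s ^ 2 / 2)) * gaussianPDF s 1 x := by
    intro x
    simp only [Pi.mul_apply, gaussianPDF_def]
    rw [← ENNReal.ofReal_mul (gaussianPDFReal_nonneg _ _ _),
        ← ENNReal.ofReal_mul (Real.exp_nonneg _)]
    congr 1
    simp only [gaussianPDFReal, NNReal.coe_one, mul_one]
    rw [mul_assoc, ← Real.exp_add, mul_comm (Real.exp (s ^ 2 / 2)),
      mul_assoc, ← Real.exp_add]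
    congr 1
    ring
  simp_rw [h]
  rw [lintegral_const_mul _ (measurable_gaussianPDF s 1),
    lintegral_gaussianPDF_eq_one s one_ne_zero, mul_one]

lemma gauss_tail {t : ℝ} (ht : 0 ≤ t) :
    gaussianReal 0 1 (Set.Iic (-t)) ≤ ENNReal.ofReal (Real.exp (-t ^ 2 / 2)) := by
  have hmeas : Measurable fun x : ℝ => ENNReal.ofReal (Real.exp (-t * x - t ^ 2)) :=
    ENNReal.measurable_ofReal.comp (Real.measurable_exp.comp
      ((measurable_id'.const_mul (-t)).sub measurable_const))
  have h1 : gaussianReal 0 1 (Set.Iic (-t))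
      = ∫⁻ _ in Set.Iic (-t), 1 ∂(gaussianReal 0 1) := (setLIntegral_one _).symm
  rw [h1]
  have h2 : (∫⁻ _ in Set.Iic (-t), 1 ∂(gaussianReal 0 1))
      ≤ ∫⁻ x in Set.Iic (-t), ENNReal.ofReal (Real.exp (-t * x - t ^ 2))
          ∂(gaussianReal 0 1) := by
    refine setLIntegral_mono hmeas fun x hx => ?_
    rw [← ENNReal.ofReal_one]
    refine ENNReal.ofReal_le_ofReal (Real.one_le_exp ?_)
    have hx' : x ≤ -t := hx
    nlinarith
  refine h2.trans ((setLIntegral_le_lintegral _ _).trans ?_)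
  have h3 : ∀ x : ℝ, ENNReal.ofReal (Real.exp (-t * x - t ^ 2))
      = ENNReal.ofReal (Real.exp (-t ^ 2)) * ENNReal.ofReal (Real.exp (-t * x)) := by
    intro x
    rw [← ENNReal.ofReal_mul (Real.exp_nonneg _), ← Real.exp_add]
    ring_nf
  simp_rw [h3]
  have hg : Measurable fun x : ℝ => ENNReal.ofReal (Real.exp (-t * x)) := by fun_prop
  rw [lintegral_const_mul _ hg, mgf_aux (-t),
    ← ENNReal.ofReal_mul (Real.exp_nonneg _), ← Real.exp_add]
  refine le_of_eq ?_
  congr 1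
  ring

lemma Phi_nonneg (x : ℝ) : 0 ≤ Phi x := ENNReal.toReal_nonneg

lemma Phi_mono {a b : ℝ} (h : a ≤ b) : Phi a ≤ Phi b :=
  ENNReal.toReal_mono (measure_ne_top _ _) (measure_mono (Set.Iic_subset_Iic.mpr h))

lemma Phi_le {x : ℝ} (hx : x ≤ 0) : Phi x ≤ Real.exp (-x ^ 2 / 2) := by
  have h := gauss_tail (t := -x) (neg_nonneg.mpr hx)
  rw [neg_neg] at h
  have := ENNReal.toReal_le_of_le_ofReal (Real.exp_nonneg _) h
  simpa [Phi, neg_sq] using this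

lemma sqrt_add_le' {a b : ℝ} (ha : 0 ≤ a) (hb : 0 ≤ b) :
    Real.sqrt (a + b) ≤ Real.sqrt a + Real.sqrt b := by
  have h : a + b ≤ (Real.sqrt a + Real.sqrt b) ^ 2 := by
    nlinarith [Real.sq_sqrt ha, Real.sq_sqrt hb, Real.sqrt_nonneg a, Real.sqrt_nonneg b,
      mul_nonneg (Real.sqrt_nonneg a) (Real.sqrt_nonneg b)]
  calc Real.sqrt (a + b) ≤ Real.sqrt ((Real.sqrt a + Real.sqrt b) ^ 2) := Real.sqrt_le_sqrt h
    _ = Real.sqrt a + Real.sqrt b := Real.sqrt_sq (by positivity)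

lemma tendsto_sqrt_atTop' : Filter.Tendsto Real.sqrt Filter.atTop Filter.atTop := by
  rw [Filter.tendsto_atTop]
  intro b
  filter_upwards [Filter.eventually_ge_atTop (b ^ 2)] with x hx
  calc b ≤ |b| := le_abs_self b
    _ = Real.sqrt (b ^ 2) := (Real.sqrt_sq_eq_abs b).symm
    _ ≤ Real.sqrt x := Real.sqrt_le_sqrt hx

lemma prod_eq (k : ℕ) (hk : 0 < k) {t : ℝ} (ht : 0 ≤ t) :
    gaussPi k (fun _ => 0) (setOf (fun z => (⨆ j, max (-(z j)) 0) ≤ t))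
      = (gaussianReal 0 1 (Set.Ici (-t))) ^ k := by
  have : Nonempty (Fin k) := Fin.pos_iff_nonempty.mp hk
  have hset : setOf (fun z : Fin k → ℝ => (⨆ j, max (-(z j)) 0) ≤ t)
      = Set.pi Set.univ (fun _ => Set.Ici (-t)) := by
    ext z
    simp only [Set.mem_setOf_eq, Set.mem_pi, Set.mem_univ, Set.mem_Ici, forall_true_left]
    constructor
    · intro h j
      have hj : max (-(z j)) 0 ≤ t :=
        le_trans (le_ciSup (f := fun j => max (-(z j)) 0) (Set.Finite.bddAbove (Set.finite_range _)) j) h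
      have := le_max_left (-(z j)) 0
      linarith
    · intro h
      exact ciSup_le fun j => max_le (by have := h j; linarith) ht
  rw [hset]
  unfold gaussPi
  rw [Measure.pi_pi]
  simp

lemma quantile_le (α : ℝ) (hα : 0 < α) (hα2 : α ≤ 1 / 2) (k : ℕ) (hk : 1 ≤ k) :
    quantile (gaussPi k (fun _ => 0)) (fun z => ⨆ j, max (-(z j)) 0) (1 - α)
      ≤ Real.sqrt (2 * Real.log (k / α)) := by
  set t := Real.sqrt (2 * Real.log (k / α)) with htdef
  have ht : 0 ≤ t := Real.sqrt_nonneg _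
  have hk0 : (0 : ℝ) < k := by exact_mod_cast hk
  apply csInf_le
  · refine ⟨0, fun t' ht' => ?_⟩
    by_contra hlt
    push_neg at hlt
    have hempty : setOf (fun z : Fin k → ℝ => (⨆ j, max (-(z j)) 0) ≤ t') = ∅ := by
      rw [Set.eq_empty_iff_forall_notMem]
      intro z hz
      have h0 : (0 : ℝ) ≤ ⨆ j, max (-(z j)) 0 :=
        Real.iSup_nonneg fun j => le_max_right _ _
      exact absurd (le_trans h0 hz) (not_le.mpr hlt)
    change 1 - α ≤ ((gaussPi k fun _ => 0) (setOf fun z => (⨆ j, max (-(z j)) 0) ≤ t')).toReal at ht'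
    rw [hempty] at ht'
    simp only [measure_empty, ENNReal.toReal_zero] at ht'
    linarith
  · show 1 - α ≤ (gaussPi k (fun _ => 0)
      (setOf (fun z => (⨆ j, max (-(z j)) 0) ≤ t))).toReal
    rw [prod_eq k hk ht, ENNReal.toReal_pow]
    set q := (gaussianReal 0 1 (Set.Iio (-t))).toReal with hqdef
    have hq0 : 0 ≤ q := ENNReal.toReal_nonneg
    have hq1 : q ≤ 1 := by
      refine ENNReal.toReal_mono ENNReal.one_ne_top ?_
      exact prob_le_one
    have hIci : (gaussianReal 0 1 (Set.Ici (-t))).toReal = 1 - q := by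
      have hc : Set.Ici (-t) = (Set.Iio (-t))ᶜ := Set.compl_Iio.symm
      rw [hc, prob_compl_eq_one_sub measurableSet_Iio,
        ENNReal.toReal_sub_of_le prob_le_one ENNReal.one_ne_top, ENNReal.toReal_one]
    rw [hIci]
    have hq : q ≤ α / k := by
      have h1 : gaussianReal 0 1 (Set.Iio (-t)) ≤ ENNReal.ofReal (Real.exp (-t ^ 2 / 2)) :=
        le_trans (measure_mono Set.Iio_subset_Iic_self) (gauss_tail ht)
      have hk1 : (1 : ℝ) ≤ (k : ℝ) := by exact_mod_cast hk
      have hka : (1 : ℝ) ≤ (k : ℝ) / α := by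
        rw [le_div_iff₀ hα]
        linarith
      have hlog : 0 ≤ Real.log ((k : ℝ) / α) := Real.log_nonneg hka
      have h2 : Real.exp (-t ^ 2 / 2) = α / k := by
        rw [htdef, Real.sq_sqrt (by linarith : 0 ≤ 2 * Real.log ((k : ℝ) / α))]
        rw [show -(2 * Real.log ((k : ℝ) / α)) / 2 = -Real.log ((k : ℝ) / α) by ring]
        rw [Real.exp_neg, Real.exp_log (by positivity), inv_div]
      calc q ≤ Real.exp (-t ^ 2 / 2) :=
            ENNReal.toReal_le_of_le_ofReal (Real.exp_nonneg _) h1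
        _ = α / k := h2
    have hber := one_add_mul_le_pow (a := -q) (by linarith) k
    have hber' : 1 - (k : ℝ) * q ≤ (1 - q) ^ k := by
      have : (1 : ℝ) + (k : ℝ) * (-q) = 1 - (k : ℝ) * q := by ring
      rw [this] at hber
      simpa [sub_eq_add_neg] using hber
    have hkq : (k : ℝ) * q ≤ α := by
      calc (k : ℝ) * q ≤ (k : ℝ) * (α / k) := by
            exact mul_le_mul_of_nonneg_left hq (le_of_lt hk0)
        _ = α := by field_simp
    linarith

/-- The minimax power of the sup test against alternatives at distance `√((2+ε) log k)`
converges to `1` as `k → ∞`. -/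
theorem stmt16 (α ε : ℝ) (hα : 0 < α) (hα2 : α ≤ 1 / 2) (hε : 0 < ε) :
    Filter.Tendsto (fun k : ℕ =>
      1 - Phi (quantile (gaussPi k (fun _ => 0)) (fun z => ⨆ j, max (-(z j)) 0) (1 - α)
            - Real.sqrt ((2 + ε) * Real.log k)))
      Filter.atTop (nhds 1) := by
  set b : ℕ → ℝ := fun k => Real.sqrt ((2 + ε) * Real.log k) with hb
  set c : ℕ → ℝ := fun k =>
    quantile (gaussPi k (fun _ => 0)) (fun z => ⨆ j, max (-(z j)) 0) (1 - α) with hc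
  set y : ℕ → ℝ := fun k => Real.sqrt (2 * Real.log (k / α)) - b k with hyd
  have hy : Filter.Tendsto y Filter.atTop Filter.atBot := by
    have hlogk : Filter.Tendsto (fun k : ℕ => Real.sqrt (Real.log k))
        Filter.atTop Filter.atTop :=
      tendsto_sqrt_atTop'.comp (Real.tendsto_log_atTop.comp tendsto_natCast_atTop_atTop)
    have hδ : Real.sqrt 2 - Real.sqrt (2 + ε) < 0 :=
      sub_neg.mpr (Real.sqrt_lt_sqrt (by norm_num) (by linarith))
    have hbound : Filter.Tendsto (fun k : ℕ =>
        Real.sqrt (-(2 * Real.log α)) + (Real.sqrt 2 - Real.sqrt (2 + ε))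
          * Real.sqrt (Real.log k)) Filter.atTop Filter.atBot := by
      apply Filter.tendsto_atBot_add_const_left
      exact Filter.Tendsto.const_mul_atTop_of_neg hδ hlogk
    refine Filter.tendsto_atBot_mono' _ ?_ hbound
    filter_upwards [Filter.eventually_ge_atTop 1] with k hk1
    have hk0 : (1 : ℝ) ≤ (k : ℝ) := by exact_mod_cast hk1
    have hlogk0 : 0 ≤ Real.log (k : ℝ) := Real.log_nonneg hk0
    have hlogα : Real.log α ≤ 0 := Real.log_nonpos (le_of_lt hα) (by linarith)
    have hdiv : Real.log ((k : ℝ) / α) = Real.log (k : ℝ) - Real.log α :=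
      Real.log_div (by positivity) (ne_of_gt hα)
    have h1 : Real.sqrt (2 * Real.log ((k : ℝ) / α))
        ≤ Real.sqrt (2 * Real.log (k : ℝ)) + Real.sqrt (-(2 * Real.log α)) := by
      rw [hdiv, show 2 * (Real.log (k : ℝ) - Real.log α)
        = 2 * Real.log (k : ℝ) + -(2 * Real.log α) by ring]
      exact sqrt_add_le' (by linarith) (by linarith)
    have h2 : Real.sqrt (2 * Real.log (k : ℝ))
        = Real.sqrt 2 * Real.sqrt (Real.log (k : ℝ)) := Real.sqrt_mul (by norm_num) _
    have h3 : b k = Real.sqrt (2 + ε) * Real.sqrt (Real.log (k : ℝ)) :=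
      Real.sqrt_mul (by linarith) _
    simp only [hyd]
    rw [h3] at *
    nlinarith [h1, h2]
  have hcb : ∀ᶠ k in Filter.atTop, c k - b k ≤ y k := by
    filter_upwards [Filter.eventually_ge_atTop 1] with k hk
    exact sub_le_sub_right (quantile_le α hα hα2 k hk) _
  have hPhi0 : Filter.Tendsto (fun k => Phi (c k - b k)) Filter.atTop (nhds 0) := by
    have hy0 : ∀ᶠ k in Filter.atTop, y k ≤ 0 := hy.eventually_le_atBot 0
    have hupper : ∀ᶠ k in Filter.atTop, Phi (c k - b k) ≤ Real.exp (-(y k) ^ 2 / 2) := by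
      filter_upwards [hcb, hy0] with k h1 h2
      exact (Phi_mono h1).trans (Phi_le h2)
    have hexp : Filter.Tendsto (fun k => Real.exp (-(y k) ^ 2 / 2))
        Filter.atTop (nhds 0) := by
      apply Real.tendsto_exp_atBot.comp
      refine Filter.tendsto_atBot_mono' _ ?_ hy
      filter_upwards [hy.eventually_le_atBot (-2)] with k hk
      show -(y k) ^ 2 / 2 ≤ y k
      obtain ⟨u, hu⟩ : ∃ u, u = y k := ⟨_, rfl⟩
      rw [← hu] at hk ⊢
      nlinarith [mul_nonneg (by linarith : (0:ℝ) ≤ -u) (by linarith : (0:ℝ) ≤ -u - 2)]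
    exact tendsto_of_tendsto_of_tendsto_of_le_of_le' tendsto_const_nhds hexp
      (Filter.Eventually.of_forall fun k => Phi_nonneg _) hupper
  have hfin : Filter.Tendsto (fun k => 1 - Phi (c k - b k)) Filter.atTop (nhds (1 - 0)) :=
    tendsto_const_nhds.sub hPhi0
  simpa using hfin
end
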